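/- arXiv:math/0501436 — 4 statements merged into one kernel-verified Lean document; each statement's English description precedes it below -/
import Mathlib

section
/- Every bimorphism from A × B to a join-semilattice with zero C factors uniquely through the tensor product: there exists a unique zero-preserving join-homomorphism g : A ⊗ B → C with g(a ⊗ b) = f(⟨a,b⟩) for all a ∈ A, b ∈ B. -/
variable {A B : Type*} [SemilatticeSup A] [OrderBot A] [SemilatticeSup B] [OrderBot B]

/-- A bi-ideal of `A × B`: a downward closed subset containing
`∇ = (A × {0}) ∪ ({0} × B)` that is closed under lateral joins. -/
def IsBiIdeal (I : Set (A × B)) : Prop :=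
  (∀ ⦃p q : A × B⦄, q ≤ p → p ∈ I → q ∈ I) ∧
  (∀ a : A, (a, (⊥ : B)) ∈ I) ∧
  (∀ b : B, ((⊥ : A), b) ∈ I) ∧
  (∀ a₀ a₁ : A, ∀ b : B, (a₀, b) ∈ I → (a₁, b) ∈ I → (a₀ ⊔ a₁, b) ∈ I) ∧
  (∀ a : A, ∀ b₀ b₁ : B, (a, b₀) ∈ I → (a, b₁) ∈ I → (a, b₀ ⊔ b₁) ∈ I)

/-- `∇ = (A × {0}) ∪ ({0} × B)`, the least bi-ideal. -/
def nabla (A B : Type*) [SemilatticeSup A] [OrderBot A] [SemilatticeSup B] [OrderBot B] :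
    Set (A × B) := {p | p.1 = ⊥ ∨ p.2 = ⊥}

/-- The pure tensor `a ⊗ b`. -/
def pureTensor (a : A) (b : B) : Set (A × B) :=
  nabla A B ∪ {p | p.1 ≤ a ∧ p.2 ≤ b}

/-- The bi-ideal generated by a subset `X` of `A × B`. -/
def biGen (X : Set (A × B)) : Set (A × B) := ⋂₀ {K | IsBiIdeal K ∧ X ⊆ K}

/-- The join of two bi-ideals in the lattice of bi-ideals. -/
def biSup (I J : Set (A × B)) : Set (A × B) := biGen (I ∪ J)

/-- Elements of the tensor product `A ⊗ B`: the compact (finitely generated) bi-ideals. -/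
def IsTensorElt (I : Set (A × B)) : Prop := ∃ S : Finset (A × B), I = biGen ↑S

/-- A bimorphism `f : A × B → C`. -/
def IsBimorphism {A B C : Type*} [SemilatticeSup A] [OrderBot A] [SemilatticeSup B]
    [OrderBot B] [SemilatticeSup C] [OrderBot C] (f : A → B → C) : Prop :=
  (∀ a : A, f a ⊥ = ⊥) ∧ (∀ b : B, f ⊥ b = ⊥) ∧
  (∀ a₀ a₁ : A, ∀ b : B, f (a₀ ⊔ a₁) b = f a₀ b ⊔ f a₁ b) ∧
  (∀ a : A, ∀ b₀ b₁ : B, f a (b₀ ⊔ b₁) = f a b₀ ⊔ f a b₁)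

/-!
A compact bi-ideal is `biGen S` for a finite `S`, and a join-homomorphism extending `f` on pure
tensors must send it to `⨆ p ∈ S, f p.1 p.2`, since `biGen (insert p S)` is the join of
`p.1 ⊗ p.2` and `biGen S`. This value depends only on `biGen S`: as `f` is a bimorphism, each
`{p | f p.1 p.2 ≤ c}` is a bi-ideal, so the supremum is `≤ c` exactly when `biGen S` lies in it.
-/

lemma subset_biGen (X : Set (A × B)) : X ⊆ biGen X :=
  fun _ hp _ hK => hK.2 hp

lemma biGen_subset {X K : Set (A × B)} (hK : IsBiIdeal K) (h : X ⊆ K) : biGen X ⊆ K :=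
  fun _ hp => hp K ⟨hK, h⟩

lemma isBiIdeal_biGen (X : Set (A × B)) : IsBiIdeal (biGen X) :=
  ⟨fun _ _ hqp hp K hK => hK.1.1 hqp (hp K hK),
    fun a _ hK => hK.1.2.1 a,
    fun b _ hK => hK.1.2.2.1 b,
    fun a₀ a₁ b h₀ h₁ K hK => hK.1.2.2.2.1 a₀ a₁ b (h₀ K hK) (h₁ K hK),
    fun a b₀ b₁ h₀ h₁ K hK => hK.1.2.2.2.2 a b₀ b₁ (h₀ K hK) (h₁ K hK)⟩

lemma biGen_mono {X Y : Set (A × B)} (h : X ⊆ Y) : biGen X ⊆ biGen Y :=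
  biGen_subset (isBiIdeal_biGen Y) (h.trans (subset_biGen Y))

lemma biSup_biGen (X Y : Set (A × B)) : biSup (biGen X) (biGen Y) = biGen (X ∪ Y) :=
  (biGen_subset (isBiIdeal_biGen _) (Set.union_subset (biGen_mono Set.subset_union_left)
    (biGen_mono Set.subset_union_right))).antisymm
    (biGen_mono (Set.union_subset_union (subset_biGen X) (subset_biGen Y)))

lemma nabla_subset {K : Set (A × B)} (hK : IsBiIdeal K) : nabla A B ⊆ K := by
  rintro ⟨a, b⟩ (rfl | rfl : a = ⊥ ∨ b = ⊥)
  · exact hK.2.2.1 b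
  · exact hK.2.1 a

lemma mem_pureTensor {a : A} {b : B} {p : A × B} :
    p ∈ pureTensor a b ↔ p.1 = ⊥ ∨ p.2 = ⊥ ∨ p.1 ≤ a ∧ p.2 ≤ b := by
  simp only [pureTensor, nabla, Set.mem_union, Set.mem_ofPred_eq, or_assoc]

lemma isBiIdeal_pureTensor (a : A) (b : B) : IsBiIdeal (pureTensor a b) := by
  simp only [IsBiIdeal, mem_pureTensor]
  refine ⟨fun p q hqp hp => ?_, by simp, by simp,
    fun a₀ a₁ b' h₀ h₁ => ?_, fun a' b₀ b₁ h₀ h₁ => ?_⟩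
  · rcases hp with h | h | h
    · exact Or.inl (le_bot_iff.mp (h ▸ hqp.1))
    · exact Or.inr (Or.inl (le_bot_iff.mp (h ▸ hqp.2)))
    · exact Or.inr (Or.inr ⟨hqp.1.trans h.1, hqp.2.trans h.2⟩)
  · rcases h₀ with rfl | rfl | h₀ <;> simp_all
    rcases h₁ with rfl | rfl | h₁ <;> simp_all
  · rcases h₀ with rfl | rfl | h₀ <;> simp_all
    rcases h₁ with rfl | rfl | h₁ <;> simp_all

lemma pureTensor_eq_biGen (a : A) (b : B) : pureTensor a b = biGen {(a, b)} := by
  refine ((biGen_subset (isBiIdeal_pureTensor a b) ?_).antisymm ?_).symm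
  · simp [mem_pureTensor]
  · rintro p (hp | hp)
    · exact nabla_subset (isBiIdeal_biGen _) hp
    · exact (isBiIdeal_biGen _).1 (show p ≤ (a, b) from hp) (subset_biGen _ rfl)

lemma nabla_eq_biGen_empty : nabla A B = biGen ∅ := by
  have hnabla : nabla A B = pureTensor ⊥ ⊥ :=
    (Set.union_eq_left.mpr fun _ hp => Or.inl (le_bot_iff.mp hp.1)).symm
  exact (nabla_subset (isBiIdeal_biGen ∅)).antisymm
    (biGen_subset (hnabla ▸ isBiIdeal_pureTensor ⊥ ⊥) (Set.empty_subset _))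

namespace IsBimorphism

variable {C : Type*} [SemilatticeSup C] [OrderBot C] {f : A → B → C}

lemma apply_mono (hf : IsBimorphism f) {a a' : A} {b b' : B} (ha : a' ≤ a) (hb : b' ≤ b) :
    f a' b' ≤ f a b :=
  calc f a' b' ≤ f a b' := by rw [← sup_eq_right.mpr ha, hf.2.2.1]; exact le_sup_left
    _ ≤ f a b := by rw [← sup_eq_right.mpr hb, hf.2.2.2]; exact le_sup_left

lemma isBiIdeal_setOf_le (hf : IsBimorphism f) (c : C) :
    IsBiIdeal {p : A × B | f p.1 p.2 ≤ c} :=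
  ⟨fun _ _ hqp hp => (hf.apply_mono hqp.1 hqp.2).trans hp,
    fun a => by simp [hf.1 a],
    fun b => by simp [hf.2.1 b],
    fun a₀ a₁ b h₀ h₁ => by simpa [hf.2.2.1] using ⟨h₀, h₁⟩,
    fun a b₀ b₁ h₀ h₁ => by simpa [hf.2.2.2] using ⟨h₀, h₁⟩⟩

lemma sup_le_iff_biGen_subset (hf : IsBimorphism f) (S : Finset (A × B)) (c : C) :
    S.sup (fun p => f p.1 p.2) ≤ c ↔ biGen ↑S ⊆ {p : A × B | f p.1 p.2 ≤ c} :=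
  ⟨fun h => biGen_subset (hf.isBiIdeal_setOf_le c) fun _ hp => (Finset.le_sup hp).trans h,
    fun h => Finset.sup_le fun _ hp => h (subset_biGen _ hp)⟩

lemma sup_eq_of_biGen_eq (hf : IsBimorphism f) {S T : Finset (A × B)}
    (h : biGen (S : Set (A × B)) = biGen ↑T) :
    S.sup (fun p => f p.1 p.2) = T.sup (fun p => f p.1 p.2) :=
  eq_of_forall_ge_iff fun c => by rw [hf.sup_le_iff_biGen_subset, h, hf.sup_le_iff_biGen_subset]

end IsBimorphism

section TensorLift

variable {C : Type*} [SemilatticeSup C] [OrderBot C]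

def IsTensorLift (f : A → B → C) (g : Set (A × B) → C) : Prop :=
  (∀ a : A, ∀ b : B, g (pureTensor a b) = f a b) ∧
    g (nabla A B) = ⊥ ∧
    (∀ I J : Set (A × B), IsTensorElt I → IsTensorElt J → g (biSup I J) = g I ⊔ g J)

open Classical in
noncomputable def tensorLift (f : A → B → C) (I : Set (A × B)) : C :=
  if h : IsTensorElt I then h.choose.sup (fun p => f p.1 p.2) else ⊥

variable {f : A → B → C}

lemma IsBimorphism.tensorLift_biGen (hf : IsBimorphism f) (S : Finset (A × B)) :
    tensorLift f (biGen ↑S) = S.sup (fun p => f p.1 p.2) := by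
  have hS : IsTensorElt (biGen (S : Set (A × B))) := ⟨S, rfl⟩
  rw [tensorLift, dif_pos hS]
  exact hf.sup_eq_of_biGen_eq hS.choose_spec.symm

lemma IsBimorphism.isTensorLift_tensorLift (hf : IsBimorphism f) :
    IsTensorLift f (tensorLift f) := by
  classical
  refine ⟨fun a b => ?_, ?_, ?_⟩
  · rw [pureTensor_eq_biGen, ← Finset.coe_singleton, hf.tensorLift_biGen, Finset.sup_singleton]
  · rw [nabla_eq_biGen_empty, ← Finset.coe_empty, hf.tensorLift_biGen, Finset.sup_empty]
  · rintro _ _ ⟨S, rfl⟩ ⟨T, rfl⟩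
    rw [biSup_biGen, ← Finset.coe_union, hf.tensorLift_biGen, hf.tensorLift_biGen,
      hf.tensorLift_biGen, Finset.sup_union]

lemma IsTensorLift.apply_biGen {g : Set (A × B) → C} (hg : IsTensorLift f g)
    (S : Finset (A × B)) : g (biGen ↑S) = S.sup (fun p => f p.1 p.2) := by
  classical
  obtain ⟨hpure, hnabla, hsup⟩ := hg
  induction S using Finset.induction_on with
  | empty => rw [Finset.coe_empty, ← nabla_eq_biGen_empty, hnabla, Finset.sup_empty]
  | insert p S _ ih =>
    have hinsert : biGen ↑(insert p S) = biSup (pureTensor p.1 p.2) (biGen ↑S) := by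
      rw [pureTensor_eq_biGen, biSup_biGen, Finset.coe_insert, Set.insert_eq]
    have hp : IsTensorElt (pureTensor p.1 p.2) :=
      ⟨{p}, by rw [pureTensor_eq_biGen, Finset.coe_singleton]⟩
    rw [hinsert, hsup _ _ hp ⟨S, rfl⟩, hpure, ih, Finset.sup_insert]

end TensorLift

/-- Every bimorphism `f : A × B → C` factors uniquely through the tensor product
`A ⊗ B` via a zero- and join-preserving map `g` with `g (a ⊗ b) = f a b`. -/
theorem bimorphism_factors_uniquely {A B C : Type*} [SemilatticeSup A] [OrderBot A]
    [SemilatticeSup B] [OrderBot B] [SemilatticeSup C] [OrderBot C]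
    (f : A → B → C) (hf : IsBimorphism f) :
    ∃ g : Set (A × B) → C,
      ((∀ a : A, ∀ b : B, g (pureTensor a b) = f a b) ∧
        g (nabla A B) = ⊥ ∧
        (∀ I J : Set (A × B), IsTensorElt I → IsTensorElt J →
          g (biSup I J) = g I ⊔ g J)) ∧
      ∀ g' : Set (A × B) → C,
        ((∀ a : A, ∀ b : B, g' (pureTensor a b) = f a b) ∧
          g' (nabla A B) = ⊥ ∧
          (∀ I J : Set (A × B), IsTensorElt I → IsTensorElt J →
            g' (biSup I J) = g' I ⊔ g' J)) →
        ∀ I : Set (A × B), IsTensorElt I → g' I = g I := by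
  refine ⟨tensorLift f, hf.isTensorLift_tensorLift, ?_⟩
  rintro g' (hg' : IsTensorLift f g') I ⟨S, rfl⟩
  rw [hg'.apply_biGen, hf.tensorLift_biGen]
end

section
/- An L-homomorphism f : A → B of join-semilattices with zero is a partial meet-homomorphism: for all n > 0 and a₀, …, a_{n−1} ∈ A, if a = a₀ ∧ ⋯ ∧ a_{n−1} exists in A, then f(a₀) ∧ ⋯ ∧ f(a_{n−1}) exists in B and equals f(a). -/
/-- An L-homomorphism of join-semilattices with zero: a zero-preserving
join-homomorphism `f` such that whenever `b ≤ f a₀` and `b ≤ f a₁`, there is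
`x ≤ a₀, a₁` with `b ≤ f x`. -/
def IsLHom {A B : Type*} [SemilatticeSup A] [OrderBot A] [SemilatticeSup B] [OrderBot B]
    (f : A → B) : Prop :=
  f ⊥ = ⊥ ∧ (∀ a₀ a₁ : A, f (a₀ ⊔ a₁) = f a₀ ⊔ f a₁) ∧
  (∀ a₀ a₁ : A, ∀ b : B, b ≤ f a₀ → b ≤ f a₁ → ∃ x : A, x ≤ a₀ ∧ x ≤ a₁ ∧ b ≤ f x)

/-! The image of a lower bound of finitely many `f aᵢ` can be pushed below a common lower bound
of the `aᵢ` by applying the defining property of an L-homomorphism one element at a time; since `m`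
is the greatest such lower bound and `f` is monotone, `f m` is the greatest lower bound of the
`f aᵢ`. -/

open Set

namespace IsLHom

variable {A B : Type*} [SemilatticeSup A] [OrderBot A] [SemilatticeSup B] [OrderBot B]
  {f : A → B}

theorem monotone (hf : IsLHom f) : Monotone f := fun x y hxy =>
  calc f x ≤ f x ⊔ f y := le_sup_left
    _ = f y := by rw [← hf.2.1, sup_eq_right.2 hxy]

theorem exists_le_of_forall_le_finset {ι : Type*} (hf : IsLHom f) {s : Finset ι}
    (hs : s.Nonempty) (a : ι → A) {b : B} (hb : ∀ i ∈ s, b ≤ f (a i)) :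
    ∃ x, (∀ i ∈ s, x ≤ a i) ∧ b ≤ f x := by
  induction hs using Finset.Nonempty.cons_induction with
  | singleton i => exact ⟨a i, by simp, hb i (Finset.mem_singleton_self i)⟩
  | cons j s _ _ ih =>
    obtain ⟨x, hxs, hbx⟩ := ih fun i hi => hb i (Finset.mem_cons_of_mem hi)
    obtain ⟨y, hyx, hyj, hby⟩ := hf.2.2 x (a j) b hbx (hb j (Finset.mem_cons_self j s))
    refine ⟨y, fun i hi => ?_, hby⟩
    rcases Finset.mem_cons.1 hi with rfl | hi
    · exact hyj
    · exact hyx.trans (hxs i hi)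

theorem isGLB_range_comp {ι : Type*} [Finite ι] [Nonempty ι] (hf : IsLHom f) {a : ι → A}
    {m : A} (hm : IsGLB (range a) m) : IsGLB (range (f ∘ a)) (f m) := by
  cases nonempty_fintype ι
  refine ⟨forall_mem_range.2 fun i => hf.monotone (hm.1 (mem_range_self i)), fun b hb => ?_⟩
  obtain ⟨x, hxa, hbx⟩ := hf.exists_le_of_forall_le_finset Finset.univ_nonempty a
    fun i _ => hb (mem_range_self i)
  have hxm : x ≤ m := hm.2 (forall_mem_range.2 fun i => hxa i (Finset.mem_univ i))
  exact hbx.trans (hf.monotone hxm)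

end IsLHom

/-- An L-homomorphism is a partial meet-homomorphism: if a finite nonempty meet
exists in `A`, then the meet of the images exists in `B` and equals the image. -/
theorem lhom_partial_meet_hom {A B : Type*} [SemilatticeSup A] [OrderBot A]
    [SemilatticeSup B] [OrderBot B] (f : A → B) (hf : IsLHom f) :
    ∀ n : ℕ, 0 < n → ∀ a : Fin n → A, ∀ m : A,
      IsGLB (Set.range a) m → IsGLB (Set.range (fun i => f (a i))) (f m) := by
  intro n hn a m hm
  have : Nonempty (Fin n) := ⟨⟨0, hn⟩⟩
  exact hf.isGLB_range_comp hm
end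

section
/- If A and B are distributive join-semilattices with zero, then the join I ∨ J of two bi-ideals I, J of A × B equals ⋃_{n<ω} X_n, where X₀ = I ∪ J and X_{n+1} is the set of lateral joins of two elements of X_n; moreover each X_n is a hereditary (downward closed) subset of A × B. -/
variable {A B : Type*} [SemilatticeSup A] [OrderBot A] [SemilatticeSup B] [OrderBot B]

/-- A join-semilattice is distributive if `u ≤ x₀ ⊔ x₁` implies
`u = x₀' ⊔ x₁'` for some `x₀' ≤ x₀`, `x₁' ≤ x₁`. -/
def IsDistribJoinSemilattice (A : Type*) [SemilatticeSup A] : Prop :=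
  ∀ u x₀ x₁ : A, u ≤ x₀ ⊔ x₁ → ∃ x₀' x₁' : A, x₀' ≤ x₀ ∧ x₁' ≤ x₁ ∧ u = x₀' ⊔ x₁'

/-- The set of lateral joins of two elements of `X`. -/
def latSet {A B : Type*} [SemilatticeSup A] [SemilatticeSup B] (X : Set (A × B)) :
    Set (A × B) :=
  {p | ∃ q ∈ X, ∃ r ∈ X,
    (q.2 = r.2 ∧ p = (q.1 ⊔ r.1, q.2)) ∨ (q.1 = r.1 ∧ p = (q.1, q.2 ⊔ r.2))}

/-- `X 0 = I ∪ J`, `X (n+1)` = lateral joins of two elements of `X n`. -/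
def iterLat {A B : Type*} [SemilatticeSup A] [SemilatticeSup B]
    (I J : Set (A × B)) : ℕ → Set (A × B)
  | 0 => I ∪ J
  | n + 1 => latSet (iterLat I J n)


/-
Each `Xₙ` is hereditary: by distributivity, an element below a lateral join `(a₀ ⊔ a₁, b)` has the
form `(a₀' ⊔ a₁', v)` with `(a₀', v) ≤ (a₀, b)` and `(a₁', v) ≤ (a₁, b)`, so it is itself a lateral
join of elements of the previous, hereditary, stage. The stages increase, so their union is closed
under lateral joins; it contains `∇ ⊆ I` and is hereditary, hence is a bi-ideal. Conversely every
bi-ideal containing `I ∪ J` contains every stage.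
-/

section LateralJoins

variable {α β : Type*} [SemilatticeSup α] [SemilatticeSup β]

theorem mem_latSet_of_snd_eq {X : Set (α × β)} {a₀ a₁ : α} {b : β}
    (h₀ : (a₀, b) ∈ X) (h₁ : (a₁, b) ∈ X) : (a₀ ⊔ a₁, b) ∈ latSet X :=
  ⟨_, h₀, _, h₁, Or.inl ⟨rfl, rfl⟩⟩

theorem mem_latSet_of_fst_eq {X : Set (α × β)} {a : α} {b₀ b₁ : β}
    (h₀ : (a, b₀) ∈ X) (h₁ : (a, b₁) ∈ X) : (a, b₀ ⊔ b₁) ∈ latSet X :=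
  ⟨_, h₀, _, h₁, Or.inr ⟨rfl, rfl⟩⟩

theorem subset_latSet (X : Set (α × β)) : X ⊆ latSet X := fun p hp => by
  simpa using mem_latSet_of_snd_eq (a₀ := p.1) (a₁ := p.1) hp hp

theorem latSet_mono : Monotone (latSet : Set (α × β) → Set (α × β)) := by
  rintro X Y hXY p ⟨q, hq, r, hr, h⟩
  exact ⟨q, hXY hq, r, hXY hr, h⟩

theorem latSet_iUnion_subset {ι : Type*} {X : ι → Set (α × β)} (hX : Directed (· ⊆ ·) X) :
    latSet (⋃ i, X i) ⊆ ⋃ i, latSet (X i) := by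
  rintro p ⟨q, hq, r, hr, h⟩
  obtain ⟨i, hqi⟩ := Set.mem_iUnion.1 hq
  obtain ⟨j, hrj⟩ := Set.mem_iUnion.1 hr
  obtain ⟨k, hik, hjk⟩ := hX i j
  exact Set.mem_iUnion.2 ⟨k, q, hik hqi, r, hjk hrj, h⟩

theorem IsLowerSet.latSet (hα : IsDistribJoinSemilattice α) (hβ : IsDistribJoinSemilattice β)
    {X : Set (α × β)} (hX : IsLowerSet X) : IsLowerSet (latSet X) := by
  rintro p ⟨u, v⟩ hle ⟨⟨a₀, b₀⟩, hq, ⟨a₁, b₁⟩, hr, ⟨rfl : b₀ = b₁, rfl⟩ | ⟨rfl : a₀ = a₁, rfl⟩⟩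
  · obtain ⟨hu, hv⟩ := Prod.mk_le_mk.1 hle
    obtain ⟨a₀', a₁', h₀, h₁, rfl⟩ := hα u a₀ a₁ hu
    exact mem_latSet_of_snd_eq (hX (Prod.mk_le_mk.2 ⟨h₀, hv⟩) hq)
      (hX (Prod.mk_le_mk.2 ⟨h₁, hv⟩) hr)
  · obtain ⟨hu, hv⟩ := Prod.mk_le_mk.1 hle
    obtain ⟨b₀', b₁', h₀, h₁, rfl⟩ := hβ v b₀ b₁ hv
    exact mem_latSet_of_fst_eq (hX (Prod.mk_le_mk.2 ⟨hu, h₀⟩) hq)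
      (hX (Prod.mk_le_mk.2 ⟨hu, h₁⟩) hr)

theorem iterLat_monotone (I J : Set (α × β)) : Monotone (iterLat I J) :=
  monotone_nat_of_le_succ fun n => subset_latSet (iterLat I J n)

theorem isLowerSet_iterLat (hα : IsDistribJoinSemilattice α) (hβ : IsDistribJoinSemilattice β)
    {I J : Set (α × β)} (hI : IsLowerSet I) (hJ : IsLowerSet J) :
    ∀ n, IsLowerSet (iterLat I J n)
  | 0 => hI.union hJ
  | n + 1 => (isLowerSet_iterLat hα hβ hI hJ n).latSet hα hβ

theorem latSet_iUnion_iterLat_subset (I J : Set (α × β)) :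
    latSet (⋃ n, iterLat I J n) ⊆ ⋃ n, iterLat I J n :=
  calc latSet (⋃ n, iterLat I J n)
      ⊆ ⋃ n, latSet (iterLat I J n) := latSet_iUnion_subset (iterLat_monotone I J).directed_le
    _ = ⋃ n, iterLat I J (n + 1) := rfl
    _ ⊆ ⋃ n, iterLat I J n := Set.iUnion_subset fun n => Set.subset_iUnion _ (n + 1)

end LateralJoins

section BiIdeals

variable {α β : Type*} [SemilatticeSup α] [OrderBot α] [SemilatticeSup β] [OrderBot β]

theorem IsBiIdeal.isLowerSet {K : Set (α × β)} (hK : IsBiIdeal K) : IsLowerSet K :=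
  hK.1

theorem IsBiIdeal.latSet_subset {X K : Set (α × β)} (hK : IsBiIdeal K) (hXK : X ⊆ K) :
    latSet X ⊆ K := by
  rintro p ⟨⟨a₀, b₀⟩, hq, ⟨a₁, b₁⟩, hr, ⟨rfl : b₀ = b₁, rfl⟩ | ⟨rfl : a₀ = a₁, rfl⟩⟩
  · exact hK.2.2.2.1 a₀ a₁ b₀ (hXK hq) (hXK hr)
  · exact hK.2.2.2.2 a₀ b₀ b₁ (hXK hq) (hXK hr)

theorem isBiIdeal_of_latSet_subset {K : Set (α × β)} (hK : IsLowerSet K)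
    (hfst : ∀ a : α, (a, (⊥ : β)) ∈ K) (hsnd : ∀ b : β, ((⊥ : α), b) ∈ K)
    (hlat : latSet K ⊆ K) : IsBiIdeal K :=
  ⟨hK, hfst, hsnd, fun _ _ _ h₀ h₁ => hlat (mem_latSet_of_snd_eq h₀ h₁),
    fun _ _ _ h₀ h₁ => hlat (mem_latSet_of_fst_eq h₀ h₁)⟩

theorem biGen_eq_of_isLeast {X Y : Set (α × β)} (h : IsLeast {K | IsBiIdeal K ∧ X ⊆ K} Y) :
    biGen X = Y :=
  h.isGLB.sInf_eq

theorem IsBiIdeal.iterLat_subset {I J K : Set (α × β)} (hK : IsBiIdeal K) (hIJ : I ∪ J ⊆ K) :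
    ∀ n, iterLat I J n ⊆ K
  | 0 => hIJ
  | n + 1 => hK.latSet_subset (hK.iterLat_subset hIJ n)

end BiIdeals

/-- In the distributive case, the join of bi-ideals `I` and `J` is
`⋃ₙ Xₙ`, and each `Xₙ` is hereditary. -/
theorem biSup_eq_iUnion_iterLat {A B : Type*} [SemilatticeSup A] [OrderBot A]
    [SemilatticeSup B] [OrderBot B]
    (hA : IsDistribJoinSemilattice A) (hB : IsDistribJoinSemilattice B)
    (I J : Set (A × B)) (hI : IsBiIdeal I) (hJ : IsBiIdeal J) :
    (biSup I J = ⋃ n : ℕ, iterLat I J n) ∧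
    (∀ n : ℕ, ∀ p q : A × B, q ≤ p → p ∈ iterLat I J n → q ∈ iterLat I J n) := by
  have hered := isLowerSet_iterLat hA hB hI.isLowerSet hJ.isLowerSet
  have hbase : I ∪ J ⊆ ⋃ n, iterLat I J n := Set.subset_iUnion (iterLat I J) 0
  have hunion : IsBiIdeal (⋃ n, iterLat I J n) :=
    isBiIdeal_of_latSet_subset (isLowerSet_iUnion hered)
      (fun a => hbase (Or.inl (hI.2.1 a))) (fun b => hbase (Or.inl (hI.2.2.1 b)))
      (latSet_iUnion_iterLat_subset I J)
  refine ⟨biGen_eq_of_isLeast ⟨⟨hunion, hbase⟩, ?_⟩, fun n p q => @hered n p q⟩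
  rintro K ⟨hK, hIJK⟩
  exact Set.iUnion_subset (hK.iterLat_subset hIJK)
end

section
/- Let A and B be lattices with zero and C a sub-tensor product of A and B. Let γ be a congruence of the lattice C and b ≤ b′ in B. Then the binary relation α on A defined by a₀ α a₁ ⟺ ((a₀ ∨ a₁) ⊗ b) ∨ ((a₀ ∧ a₁) ⊗ b′) ≡_γ (a₀ ∨ a₁) ⊗ b′ (in C) is a lattice congruence of A. -/
variable {A B : Type*} [SemilatticeSup A] [OrderBot A] [SemilatticeSup B] [OrderBot B]

/-- A sub-tensor product of `A` and `B`: a set of elements of `A ⊗ B` containing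
all pure and mixed tensors, closed under finite intersection, and forming a
lattice under containment. -/
def IsSubTensorProduct (C : Set (Set (A × B))) : Prop :=
  (∀ I ∈ C, IsTensorElt I) ∧
  (∀ a : A, ∀ b : B, pureTensor a b ∈ C) ∧
  (∀ a₀ a₁ : A, ∀ b₀ b₁ : B, ((a₀ ≤ a₁ ∧ b₁ ≤ b₀) ∨ (a₁ ≤ a₀ ∧ b₀ ≤ b₁)) →
    biSup (pureTensor a₀ b₀) (pureTensor a₁ b₁) ∈ C) ∧
  (∀ I ∈ C, ∀ J ∈ C, I ∩ J ∈ C) ∧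
  (∀ I ∈ C, ∀ J ∈ C, ∃ K ∈ C, I ⊆ K ∧ J ⊆ K ∧ ∀ L ∈ C, I ⊆ L → J ⊆ L → K ⊆ L)

/-- The join of `I` and `J` in the lattice `C` (least upper bound in `C`). -/
def joinC (C : Set (Set (A × B))) (I J : Set (A × B)) : Set (A × B) :=
  ⋂₀ {K | K ∈ C ∧ I ⊆ K ∧ J ⊆ K}

/-- A congruence of the lattice `C` (ordered by containment, with meet given by
intersection and join given by `joinC`). -/
def IsCongOn (C : Set (Set (A × B))) (γ : Set (A × B) → Set (A × B) → Prop) : Prop :=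
  (∀ I ∈ C, γ I I) ∧
  (∀ I ∈ C, ∀ J ∈ C, γ I J → γ J I) ∧
  (∀ I ∈ C, ∀ J ∈ C, ∀ K ∈ C, γ I J → γ J K → γ I K) ∧
  (∀ I ∈ C, ∀ I' ∈ C, ∀ J ∈ C, ∀ J' ∈ C, γ I I' → γ J J' →
    γ (I ∩ J) (I' ∩ J') ∧ γ (joinC C I J) (joinC C I' J'))

/-- The principal congruence `Θ_C(U, V)` of the lattice `C`. -/
def princCongOn (C : Set (Set (A × B))) (U V : Set (A × B))
    (H K : Set (A × B)) : Prop :=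
  ∀ γ : Set (A × B) → Set (A × B) → Prop, IsCongOn C γ → γ U V → γ H K

/-- The congruence `α □ β` on bi-ideals. -/
def boxCong (α : A → A → Prop) (β : B → B → Prop)
    (H K : Set (A × B)) : Prop :=
  (∀ p ∈ H, ∃ q ∈ K, α p.1 q.1 ∧ β p.2 q.2) ∧
  (∀ q ∈ K, ∃ p ∈ H, α q.1 p.1 ∧ β q.2 p.2)

/-- A lattice congruence on a lattice `L`. -/
def IsLatCong {L : Type*} [Lattice L] (α : L → L → Prop) : Prop :=
  Equivalence α ∧
  ∀ x x' y y' : L, α x x' → α y y' → α (x ⊔ y) (x' ⊔ y') ∧ α (x ⊓ y) (x' ⊓ y')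

/-- The principal lattice congruence `Θ(u, v)` on a lattice `L`. -/
def princCong {L : Type*} [Lattice L] (u v : L) (x y : L) : Prop :=
  ∀ α : L → L → Prop, IsLatCong α → α u v → α x y

/-!
For `s ∈ A` the map `x ↦ s ⊗ b ∪ x ⊗ b'` is a lattice homomorphism from the principal ideal
`↓s` into `C`: meets go to intersections, and joins go to joins in `C` because bi-ideals are
closed under lateral joins. So on `↓s` the preimage of `γ` is a lattice congruence. These
congruences agree where their domains overlap (pass from `s` to `s' ≥ s` by joining with
`s' ⊗ b`, and back by meeting with `s ⊗ b'`), and on `↓(x ∨ y)` the pair `(x ∧ y, x ∨ y)` is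
congruent exactly when `x α y` holds. A relation whose restriction to every principal ideal
is a congruence is a congruence.
-/

section LatticeCongruence

variable {L : Type*} [Lattice L] {α : L → L → Prop}

theorem IsLatCong.iff_inf_sup (hα : IsLatCong α) (x y : L) : α x y ↔ α (x ⊓ y) (x ⊔ y) := by
  constructor
  · intro h
    obtain ⟨hsup, hinf⟩ := hα.2 x y y y h (hα.1.refl y)
    rw [sup_idem] at hsup
    rw [inf_idem] at hinf
    exact hα.1.trans hinf (hα.1.symm hsup)
  · intro h
    have hx : α x (x ⊔ y) := by simpa using (hα.2 _ _ x x h (hα.1.refl x)).1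
    have hy : α y (x ⊔ y) := by simpa using (hα.2 _ _ y y h (hα.1.refl y)).1
    exact hα.1.trans hx (hα.1.symm hy)

theorem isLatCong_of_forall_Iic (θ : ∀ s : L, Set.Iic s → Set.Iic s → Prop)
    (hθ : ∀ s, IsLatCong (θ s)) (hα : ∀ s (x y : Set.Iic s), α x y ↔ θ s x y) :
    IsLatCong α := by
  have h : ∀ s : L, IsLatCong fun x y : Set.Iic s => α x y := fun s => by
    simpa only [hα] using hθ s
  have mem : ∀ {x s : L}, x ≤ s → x ∈ Set.Iic s := id
  refine ⟨⟨fun x => (h x).1.refl ⟨x, le_rfl⟩, fun {x y} hxy => ?_, fun {x y z} hxy hyz => ?_⟩,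
    fun x x' y y' hx hy => ?_⟩
  · exact (h (x ⊔ y)).1.symm (x := ⟨x, mem le_sup_left⟩) (y := ⟨y, mem le_sup_right⟩) hxy
  · exact (h (x ⊔ y ⊔ z)).1.trans (x := ⟨x, mem (le_sup_left.trans le_sup_left)⟩)
      (y := ⟨y, mem (le_sup_right.trans le_sup_left)⟩) (z := ⟨z, mem le_sup_right⟩) hxy hyz
  · exact (h (x ⊔ x' ⊔ (y ⊔ y'))).2 ⟨x, mem (le_sup_left.trans le_sup_left)⟩
      ⟨x', mem (le_sup_right.trans le_sup_left)⟩ ⟨y, mem (le_sup_left.trans le_sup_right)⟩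
      ⟨y', mem (le_sup_right.trans le_sup_right)⟩ hx hy

end LatticeCongruence

theorem joinC_eq {X Y : Type*} {C : Set (Set (X × Y))} {I J K : Set (X × Y)} (hK : K ∈ C)
    (hIK : I ⊆ K) (hJK : J ⊆ K) (hmin : ∀ L ∈ C, I ⊆ L → J ⊆ L → K ⊆ L) : joinC C I J = K :=
  subset_antisymm (Set.sInter_subset_of_mem ⟨hK, hIK, hJK⟩)
    (Set.subset_sInter fun L hL => hmin L hL.1 hL.2.1 hL.2.2)

theorem IsCongOn.isLatCong_comap {X Y L : Type*} [Lattice L] {C : Set (Set (X × Y))}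
    {γ : Set (X × Y) → Set (X × Y) → Prop} (hγ : IsCongOn C γ) (f : L → Set (X × Y))
    (hf : ∀ x, f x ∈ C) (hf_inf : ∀ x y, f (x ⊓ y) = f x ∩ f y)
    (hf_sup : ∀ x y, f (x ⊔ y) = joinC C (f x) (f y)) :
    IsLatCong fun x y => γ (f x) (f y) := by
  obtain ⟨hrefl, hsymm, htrans, hcompat⟩ := hγ
  refine ⟨⟨fun x => hrefl _ (hf x), fun h => hsymm _ (hf _) _ (hf _) h,
    fun h₁ h₂ => htrans _ (hf _) _ (hf _) _ (hf _) h₁ h₂⟩, fun x x' y y' hx hy => ?_⟩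
  dsimp only
  rw [hf_inf, hf_inf, hf_sup, hf_sup]
  exact (hcompat _ (hf x) _ (hf x') _ (hf y) _ (hf y') hx hy).symm

section SemilatticeSup

variable {X Y : Type*} [SemilatticeSup X] [OrderBot X] [SemilatticeSup Y] [OrderBot Y]

theorem mem_pureTensor_iff {a : X} {c : Y} {p : X × Y} :
    p ∈ pureTensor a c ↔ (p.1 = ⊥ ∨ p.2 = ⊥) ∨ (p.1 ≤ a ∧ p.2 ≤ c) := Iff.rfl

theorem mk_mem_pureTensor {a x : X} {c y : Y} (hx : x ≤ a) (hy : y ≤ c) :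
    (x, y) ∈ pureTensor a c :=
  Or.inr ⟨hx, hy⟩

theorem swap_mem_pureTensor {a : X} {c : Y} {p : X × Y} :
    p.swap ∈ pureTensor c a ↔ p ∈ pureTensor a c := by
  simp only [mem_pureTensor_iff, Prod.fst_swap, Prod.snd_swap, or_comm (a := p.2 = ⊥), and_comm]

theorem pureTensor_mono {a a' : X} {c c' : Y} (ha : a ≤ a') (hc : c ≤ c') :
    pureTensor a c ⊆ pureTensor a' c' := by
  rintro p (h | ⟨h1, h2⟩)
  · exact Or.inl h
  · exact mk_mem_pureTensor (h1.trans ha) (h2.trans hc)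

theorem isLowerSet_pureTensor (a : X) (c : Y) : IsLowerSet (pureTensor a c) := by
  rintro p q hqp ((h | h) | ⟨h1, h2⟩)
  · exact Or.inl (Or.inl (le_bot_iff.1 (hqp.1.trans_eq h)))
  · exact Or.inl (Or.inr (le_bot_iff.1 (hqp.2.trans_eq h)))
  · exact mk_mem_pureTensor (hqp.1.trans h1) (hqp.2.trans h2)

theorem pureTensor_subset_of_mem {I : Set (X × Y)} (hI : IsBiIdeal I) {a : X} {c : Y}
    (h : (a, c) ∈ I) : pureTensor a c ⊆ I := by
  rintro ⟨x, y⟩ ((rfl | rfl) | ⟨hx, hy⟩)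
  · exact hI.2.2.1 y
  · exact hI.2.1 x
  · exact hI.1 (Prod.mk_le_mk.2 ⟨hx, hy⟩) h

theorem sup_mem_pureTensor_union {a₀ a₁ x₀ x₁ : X} {c₀ c₁ y : Y} (ha : a₁ ≤ a₀)
    (h₀ : (x₀, y) ∈ pureTensor a₀ c₀ ∪ pureTensor a₁ c₁)
    (h₁ : (x₁, y) ∈ pureTensor a₀ c₀ ∪ pureTensor a₁ c₁) :
    (x₀ ⊔ x₁, y) ∈ pureTensor a₀ c₀ ∪ pureTensor a₁ c₁ := by
  rcases eq_or_ne y ⊥ with rfl | hy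
  · exact Or.inl (Or.inl (Or.inr rfl))
  rcases eq_or_ne x₀ ⊥ with rfl | hx₀
  · simpa using h₁
  rcases eq_or_ne x₁ ⊥ with rfl | hx₁
  · simpa using h₀
  have rect : ∀ {x}, x ≠ ⊥ → (x, y) ∈ pureTensor a₀ c₀ ∪ pureTensor a₁ c₁ →
      (x ≤ a₀ ∧ y ≤ c₀) ∨ (x ≤ a₁ ∧ y ≤ c₁) := by
    intro x hx h
    simpa [mem_pureTensor_iff, hx, hy] using h
  rcases rect hx₀ h₀ with ⟨hx₀, hy₀⟩ | ⟨hx₀, hy₁⟩ <;>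
    rcases rect hx₁ h₁ with ⟨hx₁, hy₀'⟩ | ⟨hx₁, hy₁'⟩
  · exact Or.inl (mk_mem_pureTensor (sup_le hx₀ hx₁) hy₀)
  · exact Or.inl (mk_mem_pureTensor (sup_le hx₀ (hx₁.trans ha)) hy₀)
  · exact Or.inl (mk_mem_pureTensor (sup_le (hx₀.trans ha) hx₁) hy₀')
  · exact Or.inr (mk_mem_pureTensor (sup_le hx₀ hx₁) hy₁)

theorem isBiIdeal_pureTensor_union {a₀ a₁ : X} {c₀ c₁ : Y} (ha : a₁ ≤ a₀) (hc : c₀ ≤ c₁) :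
    IsBiIdeal (pureTensor a₀ c₀ ∪ pureTensor a₁ c₁) := by
  have swap_mem : ∀ p : X × Y, p.swap ∈ pureTensor c₁ a₁ ∪ pureTensor c₀ a₀ ↔
      p ∈ pureTensor a₀ c₀ ∪ pureTensor a₁ c₁ := by
    intro p
    simp only [Set.mem_union, swap_mem_pureTensor, or_comm]
  refine ⟨(isLowerSet_pureTensor _ _).union (isLowerSet_pureTensor _ _),
    fun x => Or.inl (Or.inl (Or.inr rfl)), fun y => Or.inl (Or.inl (Or.inl rfl)),
    fun x₀ x₁ y h₀ h₁ => sup_mem_pureTensor_union ha h₀ h₁, fun x y₀ y₁ h₀ h₁ => ?_⟩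
  rw [← swap_mem] at h₀ h₁ ⊢
  exact sup_mem_pureTensor_union hc h₀ h₁

theorem biGen_eq_self {I : Set (X × Y)} (hI : IsBiIdeal I) : biGen I = I :=
  subset_antisymm (Set.sInter_subset_of_mem ⟨hI, subset_rfl⟩)
    (Set.subset_sInter fun _ hK => hK.2)

variable {C : Set (Set (X × Y))}

namespace IsSubTensorProduct

theorem isBiIdeal_of_mem (hC : IsSubTensorProduct C) {I : Set (X × Y)} (hI : I ∈ C) :
    IsBiIdeal I := by
  obtain ⟨S, rfl⟩ := hC.1 I hI
  refine ⟨fun p q hqp hp K hK => hK.1.1 hqp (hp K hK), fun a K hK => hK.1.2.1 a,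
    fun c K hK => hK.1.2.2.1 c, fun a₀ a₁ c h₀ h₁ K hK => ?_, fun a c₀ c₁ h₀ h₁ K hK => ?_⟩
  · exact hK.1.2.2.2.1 _ _ _ (h₀ K hK) (h₁ K hK)
  · exact hK.1.2.2.2.2 _ _ _ (h₀ K hK) (h₁ K hK)

theorem pureTensor_union_mem (hC : IsSubTensorProduct C) {a₀ a₁ : X} {c₀ c₁ : Y}
    (ha : a₁ ≤ a₀) (hc : c₀ ≤ c₁) : pureTensor a₀ c₀ ∪ pureTensor a₁ c₁ ∈ C := by
  simpa only [biSup, biGen_eq_self (isBiIdeal_pureTensor_union ha hc)] using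
    hC.2.2.1 a₀ a₁ c₀ c₁ (Or.inr ⟨ha, hc⟩)

end IsSubTensorProduct

variable {b b' : Y}

/-- The mixed tensor `(s ⊗ b) ∨ (x ⊗ b')`: for `x ≤ s` and `b ≤ b'` the union is already a
bi-ideal, hence the join (`joinC_pureTensor`). -/
def mixedTensor (b b' : Y) (s x : X) : Set (X × Y) := pureTensor s b ∪ pureTensor x b'

theorem mixedTensor_mem (hC : IsSubTensorProduct C) (hbb : b ≤ b') {s x : X} (hx : x ≤ s) :
    mixedTensor b b' s x ∈ C :=
  hC.pureTensor_union_mem hx hbb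

theorem mixedTensor_self (hbb : b ≤ b') (s : X) : mixedTensor b b' s s = pureTensor s b' :=
  Set.union_eq_self_of_subset_left (pureTensor_mono le_rfl hbb)

theorem joinC_pureTensor (hC : IsSubTensorProduct C) (hbb : b ≤ b') {s x : X} (hx : x ≤ s) :
    joinC C (pureTensor s b) (pureTensor x b') = mixedTensor b b' s x :=
  joinC_eq (mixedTensor_mem hC hbb hx) Set.subset_union_left Set.subset_union_right
    fun _ _ => Set.union_subset

theorem joinC_mixedTensor_pureTensor (hC : IsSubTensorProduct C) (hbb : b ≤ b') {s s' x : X}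
    (hx : x ≤ s) (hs : s ≤ s') :
    joinC C (mixedTensor b b' s x) (pureTensor s' b) = mixedTensor b b' s' x :=
  joinC_eq (mixedTensor_mem hC hbb (hx.trans hs))
    (Set.union_subset_union_left _ (pureTensor_mono hs le_rfl)) Set.subset_union_left
    fun _ _ hxL hs'L => Set.union_subset hs'L (Set.subset_union_right.trans hxL)

theorem joinC_mixedTensor_mixedTensor (hC : IsSubTensorProduct C) (hbb : b ≤ b') {s x y : X}
    (hx : x ≤ s) (hy : y ≤ s) :
    joinC C (mixedTensor b b' s x) (mixedTensor b b' s y) = mixedTensor b b' s (x ⊔ y) := by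
  refine joinC_eq (mixedTensor_mem hC hbb (sup_le hx hy))
    (Set.union_subset_union_right _ (pureTensor_mono le_sup_left le_rfl))
    (Set.union_subset_union_right _ (pureTensor_mono le_sup_right le_rfl)) fun L hL hxL hyL => ?_
  have hL' := hC.isBiIdeal_of_mem hL
  refine Set.union_subset (Set.subset_union_left.trans hxL) (pureTensor_subset_of_mem hL' ?_)
  exact hL'.2.2.2.1 x y b' (hxL (Or.inr (mk_mem_pureTensor le_rfl le_rfl)))
    (hyL (Or.inr (mk_mem_pureTensor le_rfl le_rfl)))

end SemilatticeSup

section Lattice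

variable {X Y : Type*} [Lattice X] [OrderBot X] [Lattice Y] [OrderBot Y]

theorem pureTensor_inter_pureTensor (a a' : X) (c c' : Y) :
    pureTensor a c ∩ pureTensor a' c' = pureTensor (a ⊓ a') (c ⊓ c') := by
  ext p
  simp only [Set.mem_inter_iff, mem_pureTensor_iff, le_inf_iff]
  tauto

variable {C : Set (Set (X × Y))} {b b' : Y}

theorem mixedTensor_inter_mixedTensor (s x y : X) :
    mixedTensor b b' s x ∩ mixedTensor b b' s y = mixedTensor b b' s (x ⊓ y) := by
  rw [mixedTensor, mixedTensor, mixedTensor, ← Set.union_inter_distrib_left,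
    pureTensor_inter_pureTensor, inf_idem]

theorem mixedTensor_inter_pureTensor (hbb : b ≤ b') {s s' x : X} (hx : x ≤ s) (hs : s ≤ s') :
    mixedTensor b b' s' x ∩ pureTensor s b' = mixedTensor b b' s x := by
  rw [mixedTensor, mixedTensor, Set.union_inter_distrib_right, pureTensor_inter_pureTensor,
    pureTensor_inter_pureTensor, inf_eq_right.2 hs, inf_eq_left.2 hbb, inf_eq_left.2 hx,
    inf_idem]

variable {γ : Set (X × Y) → Set (X × Y) → Prop}

theorem isLatCong_mixedTensor (hC : IsSubTensorProduct C) (hγ : IsCongOn C γ) (hbb : b ≤ b')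
    (s : X) :
    IsLatCong fun x y : Set.Iic s => γ (mixedTensor b b' s x) (mixedTensor b b' s y) :=
  hγ.isLatCong_comap (fun x : Set.Iic s => mixedTensor b b' s x)
    (fun x => mixedTensor_mem hC hbb x.2) (fun x y => (mixedTensor_inter_mixedTensor s x y).symm)
    (fun x y => (joinC_mixedTensor_mixedTensor hC hbb x.2 y.2).symm)

theorem congr_mixedTensor_iff_of_le (hC : IsSubTensorProduct C) (hγ : IsCongOn C γ)
    (hbb : b ≤ b') {s s' x y : X} (hx : x ≤ s) (hy : y ≤ s) (hs : s ≤ s') :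
    γ (mixedTensor b b' s x) (mixedTensor b b' s y) ↔
      γ (mixedTensor b b' s' x) (mixedTensor b b' s' y) := by
  obtain ⟨hrefl, -, -, hcompat⟩ := hγ
  have hmem : ∀ {t z : X}, z ≤ t → mixedTensor b b' t z ∈ C := mixedTensor_mem hC hbb
  constructor
  · intro h
    have hs'b : pureTensor s' b ∈ C := hC.2.1 s' b
    have := (hcompat _ (hmem hx) _ (hmem hy) _ hs'b _ hs'b h (hrefl _ hs'b)).2
    rwa [joinC_mixedTensor_pureTensor hC hbb hx hs,
      joinC_mixedTensor_pureTensor hC hbb hy hs] at this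
  · intro h
    have hsb' : pureTensor s b' ∈ C := hC.2.1 s b'
    have := (hcompat _ (hmem (hx.trans hs)) _ (hmem (hy.trans hs)) _ hsb' _ hsb' h
      (hrefl _ hsb')).1
    rwa [mixedTensor_inter_pureTensor hbb hx hs, mixedTensor_inter_pureTensor hbb hy hs] at this

theorem projection_iff_congr_mixedTensor (hC : IsSubTensorProduct C) (hγ : IsCongOn C γ)
    (hbb : b ≤ b') {s x y : X} (hx : x ≤ s) (hy : y ≤ s) :
    γ (joinC C (pureTensor (x ⊔ y) b) (pureTensor (x ⊓ y) b')) (pureTensor (x ⊔ y) b') ↔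
      γ (mixedTensor b b' s x) (mixedTensor b b' s y) := by
  rw [joinC_pureTensor hC hbb inf_le_sup, ← mixedTensor_self hbb (x ⊔ y),
    ← congr_mixedTensor_iff_of_le hC hγ hbb le_sup_left le_sup_right (sup_le hx hy)]
  exact ((isLatCong_mixedTensor hC hγ hbb (x ⊔ y)).iff_inf_sup
    ⟨x, le_sup_left⟩ ⟨y, le_sup_right⟩).symm

end Lattice

/-- The `⟨b, b′⟩`-projection of a congruence `γ` of `C` to `A` is a lattice
congruence of `A`. -/
theorem projection_isLatCong {A B : Type*} [Lattice A] [OrderBot A]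
    [Lattice B] [OrderBot B] (C : Set (Set (A × B))) (hC : IsSubTensorProduct C)
    (γ : Set (A × B) → Set (A × B) → Prop) (hγ : IsCongOn C γ)
    (b b' : B) (hbb : b ≤ b') :
    IsLatCong (fun x y : A =>
      γ (joinC C (pureTensor (x ⊔ y) b) (pureTensor (x ⊓ y) b'))
        (pureTensor (x ⊔ y) b')) := by
  exact isLatCong_of_forall_Iic _ (isLatCong_mixedTensor hC hγ hbb)
    fun _ x y => projection_iff_congr_mixedTensor hC hγ hbb x.2 y.2
end
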